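/- arXiv:2205.08235 — 2 statements merged into one kernel-verified Lean document; each statement's English description precedes it below -/
import Mathlib

section
/- Let G be a connected graph with a bridge e = {v1, v2} whose removal yields components G1 (containing v1) and G2 (containing v2). If i ∈ V(G1) and j ∈ V(G2), then the number of 2-tree spanning forests of G separating i and j equals τ_{G1}·f^{G2}_{v2,j} + τ_{G2}·f^{G1}_{i,v1} + τ_{G1}·τ_{G2}. -/
open SimpleGraph Finset Matrix
open scoped Classical

noncomputable section

/-- Number of spanning trees of `G`. -/
noncomputable def tau {V : Type*} [Fintype V] (G : SimpleGraph V) : ℕ :=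
  Set.ncard {H : SimpleGraph V | H ≤ G ∧ H.Connected ∧ H.IsAcyclic}

/-- Number of 2-tree spanning forests of `G` separating `i` and `j`. -/
noncomputable def twoForest {V : Type*} [Fintype V] (G : SimpleGraph V) (i j : V) : ℕ :=
  Set.ncard {H : SimpleGraph V | H ≤ G ∧ H.IsAcyclic ∧ ¬ H.Reachable i j ∧
    ∀ v, H.Reachable i v ∨ H.Reachable j v}

/-- The four Penrose equations: `B` is the Moore–Penrose inverse of `A`. -/
def IsMoorePenroseInv {n : Type*} [Fintype n] (A B : Matrix n n ℝ) : Prop :=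
  A * B * A = A ∧ B * A * B = B ∧ (A * B)ᵀ = A * B ∧ (B * A)ᵀ = B * A

/-- Laplacian matrix of a graph. -/
noncomputable def lap {V : Type*} [Fintype V] [DecidableEq V] (G : SimpleGraph V) :
    Matrix V V ℝ :=
  fun i j => if i = j then (G.degree i : ℝ) else if G.Adj i j then -1 else 0

/-- Effective resistance computed from a (Moore–Penrose inverse) matrix `Ld`. -/
noncomputable def effRes {V : Type*} [Fintype V] [DecidableEq V] (Ld : Matrix V V ℝ)
    (i j : V) : ℝ :=
  (Pi.single i 1 - Pi.single j 1) ⬝ᵥ Ld.mulVec (Pi.single i 1 - Pi.single j 1)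

/-- Transition matrix of the simple random walk on `G`. -/
noncomputable def transP {V : Type*} [Fintype V] (G : SimpleGraph V) : Matrix V V ℝ :=
  fun i j => if G.Adj i j then (1 : ℝ) / (G.degree i) else 0

/-- Stationary distribution of the simple random walk. -/
noncomputable def statPi {V : Type*} [Fintype V] (G : SimpleGraph V) (i : V) : ℝ :=
  (G.degree i : ℝ) / (2 * G.edgeFinset.card)

/-- `M` is the matrix of mean first passage times of the random walk on `G`. -/
def IsMFPT {V : Type*} [Fintype V] (G : SimpleGraph V) (M : V → V → ℝ) : Prop :=
  (∀ j, M j j = 0) ∧ ∀ i j, i ≠ j → M i j = 1 + ∑ k, transP G i k * M k j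

/-- Kemeny's constant. -/
noncomputable def kemeny {V : Type*} [Fintype V] (G : SimpleGraph V) (M : V → V → ℝ) : ℝ :=
  ∑ i, ∑ j ∈ Finset.univ.filter (· ≠ i), statPi G i * M i j * statPi G j

/-- Accessibility index of vertex `v`. -/
noncomputable def acc {V : Type*} [Fintype V] (G : SimpleGraph V) (M : V → V → ℝ) (v : V) : ℝ :=
  ∑ i ∈ Finset.univ.filter (· ≠ v), statPi G i * M i v

/-- Joining `G1` and `G2` by the bridge `v1 ∼ v2`. -/
def chainTwo {V1 V2 : Type*} (G1 : SimpleGraph V1) (G2 : SimpleGraph V2)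
    (v1 : V1) (v2 : V2) : SimpleGraph (V1 ⊕ V2) where
  Adj p q :=
    match p, q with
    | Sum.inl a, Sum.inl b => G1.Adj a b
    | Sum.inr a, Sum.inr b => G2.Adj a b
    | Sum.inl a, Sum.inr b => a = v1 ∧ b = v2
    | Sum.inr a, Sum.inl b => b = v1 ∧ a = v2
  symm := by
    constructor
    rintro (a | a) (b | b) h
    · exact G1.adj_symm h
    · exact ⟨h.1, h.2⟩
    · exact ⟨h.1, h.2⟩
    · exact G2.adj_symm h
  loopless := by
    constructor
    rintro (a | a) h
    · exact G1.irrefl h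
    · exact G2.irrefl h

end

/-!
A spanning subgraph `K` of `chainTwo G1 G2 v1 v2` is determined by its restrictions `H1`, `H2`
to the two sides and by whether it contains the bridge. If `K` omits the bridge, it is a 2-forest
separating `i` and `j` exactly when `H1` and `H2` are spanning trees. If it contains the bridge,
then `i` reaches `j` iff `i` reaches `v1` in `H1` and `v2` reaches `j` in `H2`; according to which
of the two fails, `H1` is a spanning tree and `H2` a 2-forest separating `v2` and `j`, or `H1` is a
2-forest separating `i` and `v1` and `H2` a spanning tree. The three families are disjoint
products, which gives the three terms.
-/

namespace SimpleGraph

variable {V W V' : Type*}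

lemma Reachable.lift {G : SimpleGraph V} {G' : SimpleGraph V'} (f : V → V')
    (hf : ∀ ⦃x y⦄, G.Adj x y → G'.Reachable (f x) (f y)) {x y : V} (h : G.Reachable x y) :
    G'.Reachable (f x) (f y) := by
  rw [reachable_iff_reflTransGen] at h ⊢
  exact h.lift' f fun _ _ hab => (reachable_iff_reflTransGen _ _).mp (hf hab)

lemma connected_iff_forall_reachable {G : SimpleGraph V} (i : V) :
    G.Connected ↔ ∀ a, G.Reachable i a :=
  ⟨fun h => h.preconnected i, fun h => (connected_iff_exists_forall_reachable _).mpr ⟨i, h⟩⟩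

section Sum

variable {G G' : SimpleGraph V} {H H' : SimpleGraph W} {v a c : V} {w b d : W}

lemma reachable_sum_inl_inl : (G ⊕g H).Reachable (.inl a) (.inl c) ↔ G.Reachable a c := by
  refine ⟨fun h => h.lift (Sum.elim id fun _ => a) ?_, fun h => h.map Embedding.sumInl.toHom⟩
  rintro (x | x) (y | y) hxy <;> simp_all [Adj.reachable]

lemma reachable_sum_inr_inr : (G ⊕g H).Reachable (.inr b) (.inr d) ↔ H.Reachable b d := by
  refine ⟨fun h => h.lift (Sum.elim (fun _ => b) id) ?_, fun h => h.map Embedding.sumInr.toHom⟩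
  rintro (x | x) (y | y) hxy <;> simp_all [Adj.reachable]

lemma sum_deleteEdges_inl :
    (G ⊕g H).deleteEdges {s(.inl a, .inl c)} = G.deleteEdges {s(a, c)} ⊕g H := by
  ext (x | x) (y | y) <;> simp

lemma sum_deleteEdges_inr :
    (G ⊕g H).deleteEdges {s(.inr b, .inr d)} = G ⊕g H.deleteEdges {s(b, d)} := by
  ext (x | x) (y | y) <;> simp

lemma isAcyclic_sum : (G ⊕g H).IsAcyclic ↔ G.IsAcyclic ∧ H.IsAcyclic := by
  refine ⟨fun h => ⟨h.embedding Embedding.sumInl, h.embedding Embedding.sumInr⟩,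
    fun ⟨hG, hH⟩ => isAcyclic_iff_forall_adj_isBridge.mpr ?_⟩
  rintro (x | x) (y | y) hxy
  · rw [isBridge_iff, sum_deleteEdges_inl, reachable_sum_inl_inl]
    exact isAcyclic_iff_forall_adj_isBridge.mp hG hxy
  · exact absurd hxy (not_adj_sum_inl_inr x y)
  · exact absurd hxy.symm (not_adj_sum_inl_inr y x)
  · rw [isBridge_iff, sum_deleteEdges_inr, reachable_sum_inr_inr]
    exact isAcyclic_iff_forall_adj_isBridge.mp hH hxy

@[simp] lemma comap_inl_sum : (G ⊕g H).comap Sum.inl = G := by ext; simp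

@[simp] lemma comap_inr_sum : (G ⊕g H).comap Sum.inr = H := by ext; simp

lemma sum_injective : Function.Injective fun p : SimpleGraph V × SimpleGraph W => p.1 ⊕g p.2 :=
  fun _ _ h => Prod.ext (by simpa using congrArg (SimpleGraph.comap Sum.inl) h)
    (by simpa using congrArg (SimpleGraph.comap Sum.inr) h)

lemma Reachable.sum_sup_edge_elim_left {x y : V ⊕ W}
    (h : ((G ⊕g H) ⊔ edge (Sum.inl v) (Sum.inr w)).Reachable x y) :
    G.Reachable (Sum.elim id (fun _ => v) x) (Sum.elim id (fun _ => v) y) := by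
  refine h.lift _ ?_
  rintro (x | x) (y | y) hxy <;> simp_all [edge_adj, Adj.reachable]

lemma Reachable.sum_sup_edge_elim_right {x y : V ⊕ W}
    (h : ((G ⊕g H) ⊔ edge (Sum.inl v) (Sum.inr w)).Reachable x y) :
    H.Reachable (Sum.elim (fun _ => w) id x) (Sum.elim (fun _ => w) id y) := by
  refine h.lift _ ?_
  rintro (x | x) (y | y) hxy <;> simp_all [edge_adj, Adj.reachable]

lemma reachable_sum_sup_edge_inl_inl :
    ((G ⊕g H) ⊔ edge (Sum.inl v) (Sum.inr w)).Reachable (Sum.inl a) (Sum.inl c) ↔ G.Reachable a c :=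
  ⟨Reachable.sum_sup_edge_elim_left, fun h => (h.map Embedding.sumInl.toHom).mono le_sup_left⟩

lemma reachable_sum_sup_edge_inr_inr :
    ((G ⊕g H) ⊔ edge (Sum.inl v) (Sum.inr w)).Reachable (Sum.inr b) (Sum.inr d) ↔ H.Reachable b d :=
  ⟨Reachable.sum_sup_edge_elim_right, fun h => (h.map Embedding.sumInr.toHom).mono le_sup_left⟩

lemma reachable_sum_sup_edge_inl_inr :
    ((G ⊕g H) ⊔ edge (Sum.inl v) (Sum.inr w)).Reachable (Sum.inl a) (Sum.inr d) ↔
      G.Reachable a v ∧ H.Reachable w d :=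
  ⟨fun h => ⟨h.sum_sup_edge_elim_left, h.sum_sup_edge_elim_right⟩,
    fun ⟨ha, hd⟩ => ha.symm.sum_sup_edge hd⟩

lemma reachable_sum_sup_edge_inr_inl :
    ((G ⊕g H) ⊔ edge (Sum.inl v) (Sum.inr w)).Reachable (Sum.inr d) (Sum.inl a) ↔
      G.Reachable a v ∧ H.Reachable w d :=
  reachable_comm.trans reachable_sum_sup_edge_inl_inr

lemma isAcyclic_sum_sup_edge :
    ((G ⊕g H) ⊔ edge (Sum.inl v) (Sum.inr w)).IsAcyclic ↔ G.IsAcyclic ∧ H.IsAcyclic :=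
  (isAcyclic_add_edge_iff_of_not_reachable _ _ (not_reachable_sum_inl_inr v w)).trans
    isAcyclic_sum

lemma sum_le_sum_sup_edge_iff :
    G ⊕g H ≤ (G' ⊕g H') ⊔ edge (Sum.inl v) (Sum.inr w) ↔ G ≤ G' ∧ H ≤ H' := by
  refine ⟨fun h => ⟨fun x y hxy => ?_, fun x y hxy => ?_⟩, fun ⟨hG, hH⟩ => ?_⟩
  · simpa [edge_adj] using h (show (G ⊕g H).Adj (Sum.inl x) (Sum.inl y) from hxy)
  · simpa [edge_adj] using h (show (G ⊕g H).Adj (Sum.inr x) (Sum.inr y) from hxy)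
  · refine le_sup_of_le_left ?_
    rintro (x | x) (y | y) hxy
    exacts [hG hxy, hxy, hxy, hH hxy]

lemma sum_sup_edge_le_sum_sup_edge_iff :
    (G ⊕g H) ⊔ edge (Sum.inl v) (Sum.inr w) ≤ (G' ⊕g H') ⊔ edge (Sum.inl v) (Sum.inr w) ↔ G ≤ G' ∧ H ≤ H' :=
  (sup_le_iff.trans (and_iff_left le_sup_right)).trans sum_le_sum_sup_edge_iff

lemma sum_sup_edge_ne_sum : (G ⊕g H) ⊔ edge (Sum.inl v) (Sum.inr w) ≠ G' ⊕g H' := by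
  intro h
  have hvw : ((G ⊕g H) ⊔ edge (Sum.inl v) (Sum.inr w)).Adj (Sum.inl v) (Sum.inr w) := by
    simp [edge_adj]
  exact not_adj_sum_inl_inr v w (h ▸ hvw)

@[simp] lemma comap_inl_sum_sup_edge :
    ((G ⊕g H) ⊔ edge (Sum.inl v) (Sum.inr w)).comap Sum.inl = G := by ext; simp [edge_adj]

@[simp] lemma comap_inr_sum_sup_edge :
    ((G ⊕g H) ⊔ edge (Sum.inl v) (Sum.inr w)).comap Sum.inr = H := by ext; simp [edge_adj]

lemma sum_sup_edge_injective :
    Function.Injective fun p : SimpleGraph V × SimpleGraph W =>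
      (p.1 ⊕g p.2) ⊔ edge (Sum.inl v) (Sum.inr w) :=
  fun p q h => Prod.ext (by simpa using congrArg (SimpleGraph.comap Sum.inl) h)
    (by simpa using congrArg (SimpleGraph.comap Sum.inr) h)

lemma eq_sum_comap_sup_edge {K : SimpleGraph (V ⊕ W)}
    (hK : K ≤ (G ⊕g H) ⊔ edge (Sum.inl v) (Sum.inr w)) (hvw : K.Adj (Sum.inl v) (Sum.inr w)) :
    K = (K.comap Sum.inl ⊕g K.comap Sum.inr) ⊔ edge (Sum.inl v) (Sum.inr w) := by
  ext (x | x) (y | y)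
  · simp [edge_adj]
  · have := @hK (Sum.inl x) (Sum.inr y)
    simp [edge_adj] at this ⊢
    grind
  · have := @hK (Sum.inr x) (Sum.inl y)
    simp [edge_adj] at this ⊢
    grind [Adj.symm]
  · simp [edge_adj]

lemma eq_sum_comap {K : SimpleGraph (V ⊕ W)} (hK : K ≤ (G ⊕g H) ⊔ edge (Sum.inl v) (Sum.inr w))
    (hvw : ¬ K.Adj (Sum.inl v) (Sum.inr w)) :
    K = K.comap Sum.inl ⊕g K.comap Sum.inr := by
  ext (x | x) (y | y)
  · simp
  · have := @hK (Sum.inl x) (Sum.inr y)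
    simp [edge_adj] at this ⊢
    grind
  · have := @hK (Sum.inr x) (Sum.inl y)
    simp [edge_adj] at this ⊢
    grind [Adj.symm]
  · simp

end Sum

def spanningTrees (G : SimpleGraph V) : Set (SimpleGraph V) :=
  {H | H ≤ G ∧ H.Connected ∧ H.IsAcyclic}

def twoForests (G : SimpleGraph V) (i j : V) : Set (SimpleGraph V) :=
  {H | H ≤ G ∧ H.IsAcyclic ∧ ¬ H.Reachable i j ∧ ∀ v, H.Reachable i v ∨ H.Reachable j v}

lemma disjoint_spanningTrees_twoForests (G : SimpleGraph V) (i j : V) :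
    Disjoint G.spanningTrees (G.twoForests i j) :=
  Set.disjoint_left.mpr fun _ hT hF => hF.2.2.1 (hT.2.1.preconnected i j)

variable {G1 H1 : SimpleGraph V} {G2 H2 : SimpleGraph W} {i v : V} {w j : W}

lemma sum_sup_edge_mem_twoForests_iff :
    (H1 ⊕g H2) ⊔ edge (Sum.inl v) (Sum.inr w) ∈
        ((G1 ⊕g G2) ⊔ edge (Sum.inl v) (Sum.inr w)).twoForests (Sum.inl i) (Sum.inr j) ↔
      (H1, H2) ∈ G1.spanningTrees ×ˢ G2.twoForests w j ∪ G1.twoForests i v ×ˢ G2.spanningTrees := by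
  simp only [twoForests, spanningTrees, Set.mem_ofPred_eq, Set.mem_union, Set.mem_prod,
    sum_sup_edge_le_sum_sup_edge_iff, isAcyclic_sum_sup_edge, Sum.forall,
    reachable_sum_sup_edge_inl_inl, reachable_sum_sup_edge_inl_inr,
    reachable_sum_sup_edge_inr_inl, reachable_sum_sup_edge_inr_inr,
    connected_iff_forall_reachable i, connected_iff_forall_reachable j]
  -- Whether `i` reaches `v` in `H1` decides which side is the spanning tree.
  by_cases hiv : H1.Reachable i v
  · simp only [hiv, true_and, not_true_eq_false, false_and]
    grind
  · simp only [hiv, false_and, false_or, not_false_eq_true, true_and]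
    grind [Reachable.symm]

lemma sum_mem_twoForests_iff :
    H1 ⊕g H2 ∈ ((G1 ⊕g G2) ⊔ edge (Sum.inl v) (Sum.inr w)).twoForests (Sum.inl i) (Sum.inr j) ↔
      (H1, H2) ∈ G1.spanningTrees ×ˢ G2.spanningTrees := by
  simp only [twoForests, spanningTrees, Set.mem_ofPred_eq, Set.mem_prod,
    sum_le_sum_sup_edge_iff, isAcyclic_sum, Sum.forall, not_reachable_sum_inl_inr,
    reachable_sum_inl_inl, reachable_sum_inr_inr, reachable_comm (u := Sum.inr j) (v := Sum.inl _),
    connected_iff_forall_reachable i, connected_iff_forall_reachable j]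
  grind

lemma twoForests_sum_sup_edge :
    ((G1 ⊕g G2) ⊔ edge (Sum.inl v) (Sum.inr w)).twoForests (Sum.inl i) (Sum.inr j) =
      (fun p : SimpleGraph V × SimpleGraph W => (p.1 ⊕g p.2) ⊔ edge (Sum.inl v) (Sum.inr w)) ''
          (G1.spanningTrees ×ˢ G2.twoForests w j ∪ G1.twoForests i v ×ˢ G2.spanningTrees) ∪
        (fun p : SimpleGraph V × SimpleGraph W => p.1 ⊕g p.2) ''
          (G1.spanningTrees ×ˢ G2.spanningTrees) := by
  ext K
  constructor
  · intro hK
    by_cases hvw : K.Adj (Sum.inl v) (Sum.inr w)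
    · have hKeq := eq_sum_comap_sup_edge hK.1 hvw
      rw [hKeq] at hK
      exact Or.inl ⟨_, sum_sup_edge_mem_twoForests_iff.mp hK, hKeq.symm⟩
    · have hKeq := eq_sum_comap hK.1 hvw
      rw [hKeq] at hK
      exact Or.inr ⟨_, sum_mem_twoForests_iff.mp hK, hKeq.symm⟩
  · rintro (⟨⟨H1, H2⟩, hH, rfl⟩ | ⟨⟨H1, H2⟩, hH, rfl⟩)
    exacts [sum_sup_edge_mem_twoForests_iff.mpr hH, sum_mem_twoForests_iff.mpr hH]

lemma ncard_twoForests_sum_sup_edge [Finite V] [Finite W] :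
    (((G1 ⊕g G2) ⊔ edge (Sum.inl v) (Sum.inr w)).twoForests (Sum.inl i) (Sum.inr j)).ncard =
      G1.spanningTrees.ncard * (G2.twoForests w j).ncard +
        (G1.twoForests i v).ncard * G2.spanningTrees.ncard +
        G1.spanningTrees.ncard * G2.spanningTrees.ncard := by
  have hbridge : Disjoint (G1.spanningTrees ×ˢ G2.twoForests w j)
      (G1.twoForests i v ×ˢ G2.spanningTrees) :=
    Set.disjoint_prod.mpr (Or.inl (G1.disjoint_spanningTrees_twoForests i v))
  rw [twoForests_sum_sup_edge,
    Set.ncard_union_eq (Set.disjoint_image_image fun _ _ _ _ => sum_sup_edge_ne_sum),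
    Set.ncard_image_of_injective _ sum_sup_edge_injective,
    Set.ncard_image_of_injective _ sum_injective, Set.ncard_union_eq hbridge,
    Set.ncard_prod, Set.ncard_prod, Set.ncard_prod]

end SimpleGraph

lemma tau_eq_ncard_spanningTrees {V : Type*} [Fintype V] (G : SimpleGraph V) :
    tau G = G.spanningTrees.ncard := rfl

lemma twoForest_eq_ncard_twoForests {V : Type*} [Fintype V] (G : SimpleGraph V) (i j : V) :
    twoForest G i j = (G.twoForests i j).ncard := rfl

lemma chainTwo_eq {V1 V2 : Type*} (G1 : SimpleGraph V1) (G2 : SimpleGraph V2) (v1 : V1)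
    (v2 : V2) : chainTwo G1 G2 v1 v2 = (G1 ⊕g G2) ⊔ edge (Sum.inl v1) (Sum.inr v2) := by
  ext (a | a) (b | b) <;> simp [chainTwo, edge_adj, and_comm]

theorem twoForest_chainTwo_cross_general {V1 V2 : Type*} [Fintype V1] [Fintype V2]
    (G1 : SimpleGraph V1) (G2 : SimpleGraph V2) (v1 : V1) (v2 : V2)
    (i : V1) (j : V2) :
    twoForest (chainTwo G1 G2 v1 v2) (Sum.inl i) (Sum.inr j) =
      tau G1 * twoForest G2 v2 j + tau G2 * twoForest G1 i v1 + tau G1 * tau G2 := by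
  rw [twoForest_eq_ncard_twoForests, chainTwo_eq, ncard_twoForests_sum_sup_edge,
    twoForest_eq_ncard_twoForests, twoForest_eq_ncard_twoForests, tau_eq_ncard_spanningTrees,
    tau_eq_ncard_spanningTrees]
  ring

/-- if `i ∈ V(G1)` and `j ∈ V(G2)`, then
`f^G_{i,j} = τ_{G1}·f^{G2}_{v2,j} + τ_{G2}·f^{G1}_{i,v1} + τ_{G1}·τ_{G2}`. -/
theorem twoForest_chainTwo_cross {V1 V2 : Type*} [Fintype V1] [Fintype V2]
    (G1 : SimpleGraph V1) (G2 : SimpleGraph V2) (v1 : V1) (v2 : V2)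
    (h1 : G1.Connected) (h2 : G2.Connected) (i : V1) (j : V2) :
    twoForest (chainTwo G1 G2 v1 v2) (Sum.inl i) (Sum.inr j) =
      tau G1 * twoForest G2 v2 j + tau G2 * twoForest G1 i v1 + tau G1 * tau G2 :=
  twoForest_chainTwo_cross_general G1 G2 v1 v2 i j
end

section
/- For a simple random walk on a connected graph G with m edges, and any vertex v, the moment μ_G(v) := d_G^T R_G e_v satisfies μ_G(v) = α_G(v) + κ(G), where α_G(v) = Σ_{i ≠ v} π_i m_{i,v} is the accessibility index of v and κ(G) = Σ_{i} Σ_{j≠i} π_i m_{i,j} π_j is Kemeny's constant. -/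
open SimpleGraph Finset Matrix
open scoped Classical

/-!
Each column of the mean first passage matrix satisfies `L M_{·j} = d - 2m e_j`: off the diagonal
this is first-step analysis, and the `j`-th entry follows because the entries of `L x` sum to zero.
Hence `L (M_{·v} - M_{·i}) = 2m (e_i - e_v)`, and the Penrose equation `L L† L = L` turns this into
the commute-time identity `r_{iv} = (m_{iv} + m_{vi}) / 2m`. Summing against `d` splits the moment
into `∑ π_i m_{iv} = α(v)` and `∑ m_{vj} π_j`; the latter is Kemeny's constant because
`i ↦ ∑ m_{ij} π_j` lies in the kernel of `L`, which on a connected graph consists of constants.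
-/

namespace Matrix

variable {n R : Type*} [Fintype n] [CommRing R]

theorem dotProduct_mulVec_eq_of_mulVec_eq {A B : Matrix n n R} (hA : A.IsSymm)
    (hABA : A * B * A = A) {w x : n → R} (hw : A *ᵥ w = x) :
    x ⬝ᵥ (B *ᵥ x) = x ⬝ᵥ w := by
  have hAw : A *ᵥ w = w ᵥ* A := by rw [← vecMul_transpose, hA.eq]
  subst hw
  rw [dotProduct_mulVec, hAw, vecMul_vecMul, ← hAw, dotProduct_mulVec, vecMul_vecMul, hABA, hAw]

end Matrix

namespace SimpleGraph

variable {V : Type*} [Fintype V] {G : SimpleGraph V}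

theorem lap_eq_lapMatrix [DecidableEq V] : lap G = G.lapMatrix ℝ := by
  ext i j
  by_cases h : i = j
  · subst h
    simp [lap, lapMatrix, degMatrix]
  · simp [lap, lapMatrix, degMatrix, h, apply_ite]

theorem sum_lapMatrix_mulVec [DecidableEq V] (x : V → ℝ) : ∑ i, (G.lapMatrix ℝ *ᵥ x) i = 0 :=
  calc ∑ i, (G.lapMatrix ℝ *ᵥ x) i = (fun _ ↦ 1) ⬝ᵥ (G.lapMatrix ℝ *ᵥ x) := by
        simp [dotProduct]
    _ = 0 := by
        rw [dotProduct_mulVec, ← mulVec_transpose, (isSymm_lapMatrix ℝ G).eq,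
          lapMatrix_mulVec_const_eq_zero, zero_dotProduct]

theorem two_mul_card_edgeFinset_ne_zero (hG : G ≠ ⊥) : (2 * G.edgeFinset.card : ℝ) ≠ 0 := by
  have := (edgeFinset_nonempty.2 hG).card_pos
  positivity

theorem statPi_mul_two_mul_card_edgeFinset (hG : G ≠ ⊥) (i : V) :
    statPi G i * (2 * G.edgeFinset.card) = G.degree i :=
  div_mul_cancel₀ _ (two_mul_card_edgeFinset_ne_zero hG)

theorem sum_statPi (hG : G ≠ ⊥) : ∑ i, statPi G i = 1 := by
  rw [← mul_left_inj' (two_mul_card_edgeFinset_ne_zero hG), Finset.sum_mul]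
  simp_rw [statPi_mul_two_mul_card_edgeFinset hG]
  rw [← Nat.cast_sum, sum_degrees_eq_twice_card_edges, one_mul]
  push_cast
  rfl

theorem degree_mul_transP (i k : V) :
    (G.degree i : ℝ) * transP G i k = if G.Adj i k then 1 else 0 := by
  by_cases h : G.Adj i k
  · have : (G.degree i : ℝ) ≠ 0 := by
      exact_mod_cast (G.degree_pos_iff_exists_adj i).2 ⟨k, h⟩ |>.ne'
    simp [transP, h, this]
  · simp [transP, h]

theorem lapMatrix_mulVec_mfpt_apply_of_ne [DecidableEq V] {M : V → V → ℝ} (hM : IsMFPT G M)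
    {i j : V} (h : i ≠ j) : (G.lapMatrix ℝ *ᵥ fun k ↦ M k j) i = G.degree i := by
  have hnbr : (G.degree i : ℝ) * ∑ k, transP G i k * M k j = ∑ k ∈ G.neighborFinset i, M k j := by
    simp_rw [Finset.mul_sum, ← mul_assoc, degree_mul_transP, ite_mul, one_mul, zero_mul,
      ← Finset.sum_filter, neighborFinset_eq_filter]
  rw [lapMatrix_mulVec_apply, hM.2 i j h, mul_add, hnbr]
  ring

theorem lapMatrix_mulVec_mfpt [DecidableEq V] {M : V → V → ℝ} (hM : IsMFPT G M) (j : V) :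
    (G.lapMatrix ℝ *ᵥ fun k ↦ M k j) =
      (fun i ↦ (G.degree i : ℝ)) - (2 * G.edgeFinset.card : ℝ) • Pi.single j 1 := by
  ext i
  rcases eq_or_ne i j with rfl | h
  · have hsum := sum_lapMatrix_mulVec (G := G) fun k ↦ M k i
    have hdeg : ∑ k ∈ univ.erase i, (G.degree k : ℝ) = 2 * G.edgeFinset.card - G.degree i := by
      rw [Finset.sum_erase_eq_sub (mem_univ i), ← Nat.cast_sum, sum_degrees_eq_twice_card_edges]
      push_cast
      rfl
    rw [← Finset.add_sum_erase _ _ (mem_univ i), Finset.sum_congr rfl fun k hk ↦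
      lapMatrix_mulVec_mfpt_apply_of_ne hM (Finset.ne_of_mem_erase hk), hdeg] at hsum
    simp only [Pi.sub_apply, Pi.smul_apply, Pi.single_eq_same, smul_eq_mul, mul_one]
    linarith
  · simp [lapMatrix_mulVec_mfpt_apply_of_ne hM h, h]

theorem effRes_eq_of_isMFPT [DecidableEq V] (hG : G ≠ ⊥) {M : V → V → ℝ} (hM : IsMFPT G M)
    {Ld : Matrix V V ℝ} (hLd : IsMoorePenroseInv (lap G) Ld) (i j : V) :
    effRes Ld i j = (M i j + M j i) / (2 * G.edgeFinset.card) := by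
  set c : ℝ := 2 * G.edgeFinset.card
  have hw : G.lapMatrix ℝ *ᵥ (c⁻¹ • fun k ↦ M k j - M k i) = Pi.single i 1 - Pi.single j 1 := by
    rw [mulVec_smul, show (fun k ↦ M k j - M k i) = (fun k ↦ M k j) - fun k ↦ M k i from rfl,
      mulVec_sub, lapMatrix_mulVec_mfpt hM, lapMatrix_mulVec_mfpt hM, sub_sub_sub_cancel_left,
      ← smul_sub, smul_smul, inv_mul_cancel₀ (two_mul_card_edgeFinset_ne_zero hG), one_smul]
  rw [lap_eq_lapMatrix] at hLd
  rw [effRes, dotProduct_mulVec_eq_of_mulVec_eq (isSymm_lapMatrix ℝ G) hLd.1 hw]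
  simp only [dotProduct_smul, sub_dotProduct, single_dotProduct, hM.1, sub_zero, one_mul,
    zero_sub, mul_neg, sub_neg_eq_add, smul_eq_mul]
  field_simp

theorem lapMatrix_mulVec_sum_mfpt_mul_statPi [DecidableEq V] (hG : G ≠ ⊥) {M : V → V → ℝ}
    (hM : IsMFPT G M) : G.lapMatrix ℝ *ᵥ (fun i ↦ ∑ j, M i j * statPi G j) = 0 := by
  have hcol : (fun i ↦ ∑ j, M i j * statPi G j) = ∑ j, statPi G j • fun k ↦ M k j := by
    ext i
    simp [Finset.sum_apply, mul_comm]
  ext i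
  simp only [hcol, mulVec_sum, mulVec_smul, lapMatrix_mulVec_mfpt hM, Finset.sum_apply,
    Pi.smul_apply, Pi.sub_apply, Pi.single_apply, smul_eq_mul, mul_ite, mul_one, mul_zero, mul_sub,
    sum_sub_distrib, ← sum_mul, sum_statPi hG, one_mul, sum_ite_eq, mem_univ, ↓reduceIte,
    Pi.zero_apply]
  rw [statPi_mul_two_mul_card_edgeFinset hG, sub_self]

theorem sum_mfpt_mul_statPi_eq (hG : G.Preconnected) (hbot : G ≠ ⊥) {M : V → V → ℝ}
    (hM : IsMFPT G M) (i j : V) : ∑ k, M i k * statPi G k = ∑ k, M j k * statPi G k :=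
  (lapMatrix_mulVec_eq_zero_iff_forall_reachable G).1
    (lapMatrix_mulVec_sum_mfpt_mul_statPi hbot hM) i j (hG i j)

theorem kemeny_eq_sum_mfpt_mul_statPi (hG : G.Preconnected) (hbot : G ≠ ⊥) {M : V → V → ℝ}
    (hM : IsMFPT G M) (v : V) : kemeny G M = ∑ j, M v j * statPi G j := by
  have hrow : ∀ i, ∑ j ∈ univ.filter (· ≠ i), statPi G i * M i j * statPi G j =
      statPi G i * ∑ j, M i j * statPi G j := by
    intro i
    rw [Finset.sum_filter_of_ne fun j _ h hji ↦ by simp [hji, hM.1] at h, Finset.mul_sum]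
    simp_rw [mul_assoc]
  simp_rw [kemeny, hrow, sum_mfpt_mul_statPi_eq hG hbot hM _ v, ← Finset.sum_mul,
    sum_statPi hbot, one_mul]

theorem acc_eq_sum_statPi_mul_mfpt {M : V → V → ℝ} (hM : IsMFPT G M) (v : V) :
    acc G M v = ∑ i, statPi G i * M i v :=
  Finset.sum_filter_of_ne fun i _ h hiv ↦ by simp [hiv, hM.1] at h

end SimpleGraph

/-- the moment `μ_G(v) = d_Gᵀ R_G e_v` satisfies
`μ_G(v) = α_G(v) + κ(G)`. -/
theorem moment_eq_acc_add_kemeny {V : Type*} [Fintype V] [DecidableEq V]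
    (G : SimpleGraph V) (hG : G.Connected) (M : V → V → ℝ) (hM : IsMFPT G M)
    (Ld : Matrix V V ℝ) (hLd : IsMoorePenroseInv (lap G) Ld) (v : V) :
    ∑ i, (G.degree i : ℝ) * effRes Ld i v = acc G M v + kemeny G M := by
  rcases subsingleton_or_nontrivial V with _ | _
  · simp [Subsingleton.elim _ v, effRes, acc, kemeny]
  have hbot : G ≠ ⊥ := fun h ↦ not_connected_bot (h ▸ hG)
  calc ∑ i, (G.degree i : ℝ) * effRes Ld i v
      = ∑ i, (statPi G i * M i v + M v i * statPi G i) := by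
        refine Finset.sum_congr rfl fun i _ ↦ ?_
        rw [effRes_eq_of_isMFPT hbot hM hLd, statPi]
        ring
    _ = acc G M v + kemeny G M := by
        rw [Finset.sum_add_distrib, acc_eq_sum_statPi_mul_mfpt hM,
          kemeny_eq_sum_mfpt_mul_statPi hG.preconnected hbot hM v]
end
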